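/- arXiv:2101.00399 — 2 statements merged into one kernel-verified Lean document; each statement's English description precedes it below -/
import Mathlib

section
/- Let μ*(·, u) denote the student-optimal stable matching for market (N, M, u). For any student i, let μ*_i(·, u_{-i}) be the student-optimal stable matching in the market with student i removed, and let g_i(μ*_i) be the matching on N obtained by leaving i unmatched. Then μ*(·, u) = T*(g_i(μ*_i(·, u_{-i}))): re-stabilizing the SOSM of the market without i (after reintroducing i as unmatched) yields the SOSM of the full market. -/
attribute [local instance] Classical.propDecidable

noncomputable section

/-- A many-to-one college admissions market (college admissions model) with `n`
students and `m` colleges.  Strict preferences are encoded by injective rank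
functions (a smaller rank means more preferred); `none` is the outside option
`0` (being unmatched / an unfilled position). -/
structure Market (n m : ℕ) where
  quota : Fin m → ℕ
  sRank : Fin n → Option (Fin m) → ℕ
  sRank_inj : ∀ i, Function.Injective (sRank i)
  cRank : Fin m → Option (Fin n) → ℕ
  cRank_inj : ∀ j, Function.Injective (cRank j)

namespace Market

variable {n m : ℕ}

/-- Student `i` strictly prefers `a` to `b`. -/
def sPref (M : Market n m) (i : Fin n) (a b : Option (Fin m)) : Prop :=
  M.sRank i a < M.sRank i b

/-- College `j` strictly prefers `a` to `b`. -/
def cPref (M : Market n m) (j : Fin m) (a b : Option (Fin n)) : Prop :=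
  M.cRank j a < M.cRank j b

/-- The set `μ⁻¹(j)` of students matched to college `j` under `μ`. -/
def assigned (M : Market n m) (μ : Fin n → Option (Fin m)) (j : Fin m) : Finset (Fin n) :=
  Finset.univ.filter fun i => μ i = some j

/-- `μ` is a (capacity-feasible) matching: `|μ⁻¹(j)| ≤ q_j` for every college. -/
def IsMatching (M : Market n m) (μ : Fin n → Option (Fin m)) : Prop :=
  ∀ j, (M.assigned μ j).card ≤ M.quota j

/-- Individual rationality of `μ`. -/
def IndRational (M : Market n m) (μ : Fin n → Option (Fin m)) : Prop :=
  (∀ i, ¬ M.sPref i none (μ i)) ∧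
  (∀ j i', μ i' = some j → ¬ M.cPref j none (some i'))

/-- `(i, j)` is a blocking pair for `μ`. -/
def Blocks (M : Market n m) (μ : Fin n → Option (Fin m)) (i : Fin n) (j : Fin m) : Prop :=
  M.sPref i (some j) (μ i) ∧
  (((M.assigned μ j).card < M.quota j ∧ M.cPref j (some i) none) ∨
   ((M.assigned μ j).card = M.quota j ∧ ∃ i' ∈ M.assigned μ j, M.cPref j (some i) (some i')))

/-- `μ` is stable: individually rational with no blocking pair. -/
def Stable (M : Market n m) (μ : Fin n → Option (Fin m)) : Prop :=
  M.IndRational μ ∧ ∀ i j, ¬ M.Blocks μ i j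

/-- `μ` is envy-free: individually rational and any blocking pair involves an
unmatched student. -/
def EnvyFree (M : Market n m) (μ : Fin n → Option (Fin m)) : Prop :=
  M.IndRational μ ∧ ∀ i j, M.Blocks μ i j → μ i = none

/-- `μ` is 1-envy-free: envy-free, and either stable or there is one and only
one student who belongs to every blocking pair. -/
def OneEnvyFree (M : Market n m) (μ : Fin n → Option (Fin m)) : Prop :=
  M.EnvyFree μ ∧ (M.Stable μ ∨ ∃! i : Fin n, ∀ i' j, M.Blocks μ i' j → i' = i)

/-- `(i, j)` is a student-maximal blocking pair: `j` is `i`'s most preferred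
college among those with whom `i` forms a blocking pair. -/
def StudentMaxBlock (M : Market n m) (μ : Fin n → Option (Fin m)) (i : Fin n) (j : Fin m) :
    Prop :=
  M.Blocks μ i j ∧ ∀ j', M.Blocks μ i j' → M.sRank i (some j) ≤ M.sRank i (some j')

/-- `T` is the re-stabilization operator: on a 1-envy-free matching with no
blocking pair it is the identity; otherwise it satisfies the unique
student-maximal blocking pair `(i, j)`, matching `i` to `j`, keeping everyone
not matched to `j` unchanged, keeping the students of `j` if `j` has a vacancy
or if they are not `j`'s worst current student, and unmatching `j`'s worst
current student otherwise. -/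
def IsTStep (M : Market n m) (T : (Fin n → Option (Fin m)) → Fin n → Option (Fin m)) : Prop :=
  ∀ μ, M.IsMatching μ → M.OneEnvyFree μ →
    ((∀ i j, ¬ M.Blocks μ i j) → T μ = μ) ∧
    ∀ i j, M.StudentMaxBlock μ i j →
      T μ i = some j ∧
      ∀ i', i' ≠ i →
        (μ i' ≠ some j → T μ i' = μ i') ∧
        (μ i' = some j →
          ((M.assigned μ j).card < M.quota j → T μ i' = μ i') ∧
          ((M.assigned μ j).card = M.quota j →
            ((∃ i'' ∈ M.assigned μ j, M.cPref j (some i') (some i'')) → T μ i' = μ i') ∧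
            ((∀ i'' ∈ M.assigned μ j, i'' ≠ i' → M.cPref j (some i'') (some i')) →
              T μ i' = none)))

/-- `Tstar` iterates `T` finitely many times from any 1-envy-free matching
until a fixed point of `T` is reached. -/
def IsTStarOf (M : Market n m) (T Tstar : (Fin n → Option (Fin m)) → Fin n → Option (Fin m)) :
    Prop :=
  ∀ μ, M.IsMatching μ → M.OneEnvyFree μ →
    ∃ r : ℕ, Tstar μ = T^[r] μ ∧ T (Tstar μ) = Tstar μ

/-- A one-step responsive improvement for college `j`: `A` is obtained from `B`
either by filling a vacancy with an acceptable student, or by swapping a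
student of `B` for a strictly preferred outside student. -/
def SwapImproves (M : Market n m) (j : Fin m) (A B : Finset (Fin n)) : Prop :=
  (∃ i₁, i₁ ∉ B ∧ A = insert i₁ B ∧ M.cPref j (some i₁) none) ∨
  (∃ i₁ i₂, i₂ ∈ B ∧ i₁ ∉ B ∧ A = insert i₁ (B.erase i₂) ∧ M.cPref j (some i₁) (some i₂))

/-- The responsive extension of college `j`'s strict preference to sets of
students: the transitive closure of one-step responsive improvements. -/
def SetPref (M : Market n m) (j : Fin m) (A B : Finset (Fin n)) : Prop :=
  Relation.TransGen (M.SwapImproves j) A B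

/-- `μ₁ ≿ μ₂`: every college either gets the same set of students or a
strictly (responsively) preferred set. -/
def CollegesWeakPref (M : Market n m) (μ₁ μ₂ : Fin n → Option (Fin m)) : Prop :=
  ∀ j, M.assigned μ₁ j = M.assigned μ₂ j ∨ M.SetPref j (M.assigned μ₁ j) (M.assigned μ₂ j)

/-- `μ` is the student-optimal stable matching: a stable matching that every
student weakly prefers to any other stable matching. -/
def IsSOSM (M : Market n m) (μ : Fin n → Option (Fin m)) : Prop :=
  M.IsMatching μ ∧ M.Stable μ ∧
    ∀ μ', M.IsMatching μ' → M.Stable μ' → ∀ i, M.sRank i (μ i) ≤ M.sRank i (μ' i)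

/-- `μ` (with student `i` unmatched) is a stable matching of the market in
which student `i` has been removed. -/
def StableAway (M : Market n m) (i : Fin n) (μ : Fin n → Option (Fin m)) : Prop :=
  μ i = none ∧
  (∀ i', i' ≠ i → ¬ M.sPref i' none (μ i')) ∧
  (∀ j i', i' ≠ i → μ i' = some j → ¬ M.cPref j none (some i')) ∧
  (∀ i' j, i' ≠ i → ¬ M.Blocks μ i' j)

/-- `μ` (with student `i` unmatched) is the student-optimal stable matching of
the market in which student `i` has been removed. -/
def IsSOSMAway (M : Market n m) (i : Fin n) (μ : Fin n → Option (Fin m)) : Prop :=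
  M.IsMatching μ ∧ M.StableAway i μ ∧
    ∀ μ', M.IsMatching μ' → M.StableAway i μ' →
      ∀ i', i' ≠ i → M.sRank i' (μ i') ≤ M.sRank i' (μ' i')

/-- The maximum rank difference `h(w)` among the colleges' preferences: the
largest rank gap `|w_j(i₁) − w_j(i₂)|` over colleges `j` and pairs `(i₁, i₂)`
on whose relative ranking at least two colleges disagree (`0` if there is no
disagreement). -/
def maxRankDiff (M : Market n m) : ℕ :=
  Finset.univ.sup fun j : Fin m =>
    (Finset.univ.filter fun q : Option (Fin n) × Option (Fin n) =>
        ∃ j₁ j₂ : Fin m, M.cPref j₁ q.1 q.2 ∧ M.cPref j₂ q.2 q.1).sup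
      fun q => ((M.cRank j q.1 : ℤ) - (M.cRank j q.2 : ℤ)).natAbs

/-- `N*_{j,1}(μ) = μ⁻¹(j) \ μ*⁻¹(j)` : students of `j` under `μ` but not `μs`. -/
def Nset1 (M : Market n m) (μ μs : Fin n → Option (Fin m)) (j : Fin m) : Finset (Fin n) :=
  M.assigned μ j \ M.assigned μs j

/-- `N*_{j,0}(μ) = μ*⁻¹(j) \ μ⁻¹(j)` : students of `j` under `μs` but not `μ`. -/
def Nset0 (M : Market n m) (μ μs : Fin n → Option (Fin m)) (j : Fin m) : Finset (Fin n) :=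
  M.assigned μs j \ M.assigned μ j

/-- The rank `r_{j,i}(A)` of student `i` within the set `A` according to `≻_j`. -/
def rankIn (M : Market n m) (j : Fin m) (i : Fin n) (A : Finset (Fin n)) : ℕ :=
  (A.filter fun i' => M.cPref j (some i') (some i)).card + 1

/-- `a ▷_j b`: student `a` displaces student `b` from college `j` (as we move
from the SOSM `μs` to the stable matching `μ`). -/
def Displaces (M : Market n m) (μ μs : Fin n → Option (Fin m)) (j : Fin m) (a b : Fin n) :
    Prop :=
  a ∈ M.Nset1 μ μs j ∧ b ∈ M.Nset0 μ μs j ∧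
    M.rankIn j a (M.Nset1 μ μs j) = M.rankIn j b (M.Nset0 μ μs j)

/-- `a ▷ b`: `a` displaces `b` from some college. -/
def DisplacesAny (M : Market n m) (μ μs : Fin n → Option (Fin m)) (a b : Fin n) : Prop :=
  ∃ j, M.Displaces μ μs j a b

/-- The positions of the related one-to-one market: college `j` is split into
`q_j` ordered positions. -/
abbrev Position (M : Market n m) : Type := (j : Fin m) × Fin (M.quota j)

/-- Student `i`'s strict preference over positions in the related one-to-one
market: positions of strictly better colleges are better, and within a college
a smaller index is better. -/
def PosBetter (M : Market n m) (i : Fin n) :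
    Option (Position M) → Option (Position M) → Prop
  | some q, some q' =>
      M.sRank i (some q.1) < M.sRank i (some q'.1) ∨ (q.1 = q'.1 ∧ (q.2 : ℕ) < (q'.2 : ℕ))
  | some q, none => M.sRank i (some q.1) < M.sRank i none
  | none, some q' => M.sRank i none < M.sRank i (some q'.1)
  | none, none => False

/-- `(μN, μM)` is the one-to-one matching of the related market corresponding
to the many-to-one matching `μ`: the students of `μ⁻¹(j)` occupy, in the order
of college `j`'s preference, the ordered positions of `j`. -/
def Corresponds (M : Market n m) (μ : Fin n → Option (Fin m))
    (μN : Fin n → Option (Position M)) (μM : Position M → Option (Fin n)) : Prop :=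
  (∀ i p, μN i = some p ↔ μM p = some i) ∧
  (∀ i j, (∃ s, μN i = some ⟨j, s⟩) ↔ μ i = some j) ∧
  (∀ i j (s : Fin (M.quota j)), μN i = some ⟨j, s⟩ →
    (s : ℕ) = ((M.assigned μ j).filter fun i' => M.cPref j (some i') (some i)).card)

/-- `(i, p)` is a blocking pair in the related one-to-one market. -/
def PosBlocks (M : Market n m) (μN : Fin n → Option (Position M))
    (μM : Position M → Option (Fin n)) (i : Fin n) (p : Position M) : Prop :=
  M.PosBetter i (some p) (μN i) ∧ M.cPref p.1 (some i) (μM p)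

/-- Individual rationality in the related one-to-one market. -/
def PosIR (M : Market n m) (μN : Fin n → Option (Position M))
    (μM : Position M → Option (Fin n)) : Prop :=
  (∀ i, ¬ M.PosBetter i none (μN i)) ∧ (∀ p : Position M, ¬ M.cPref p.1 none (μM p))

/-- Stability in the related one-to-one market. -/
def PosStable (M : Market n m) (μN : Fin n → Option (Position M))
    (μM : Position M → Option (Fin n)) : Prop :=
  M.PosIR μN μM ∧ ∀ i p, ¬ M.PosBlocks μN μM i p

/-- Simplicity in the related one-to-one market: individually rational and any
blocking pair involves an unmatched student. -/
def PosSimple (M : Market n m) (μN : Fin n → Option (Position M))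
    (μM : Position M → Option (Fin n)) : Prop :=
  M.PosIR μN μM ∧ ∀ i p, M.PosBlocks μN μM i p → μN i = none

/-- 1-simplicity in the related one-to-one market: simple, and either stable or
there is one and only one student belonging to every blocking pair. -/
def PosOneSimple (M : Market n m) (μN : Fin n → Option (Position M))
    (μM : Position M → Option (Fin n)) : Prop :=
  M.PosSimple μN μM ∧
    (M.PosStable μN μM ∨ ∃! i : Fin n, ∀ i' p, M.PosBlocks μN μM i' p → i' = i)

end Market

/-- A generic one-to-one matching market with `n` students and `p` positions,
with strict preferences encoded by injective rank functions. -/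
structure OOMarket (n p : ℕ) where
  sRank : Fin n → Option (Fin p) → ℕ
  sRank_inj : ∀ i, Function.Injective (sRank i)
  pRank : Fin p → Option (Fin n) → ℕ
  pRank_inj : ∀ c, Function.Injective (pRank c)

namespace OOMarket

variable {n p : ℕ}

/-- `(μN, μM)` is a one-to-one matching. -/
def IsOOMatching (O : OOMarket n p) (μN : Fin n → Option (Fin p))
    (μM : Fin p → Option (Fin n)) : Prop :=
  ∀ i c, μN i = some c ↔ μM c = some i

/-- `(i, c)` is a blocking pair for `(μN, μM)`. -/
def OOBlocks (O : OOMarket n p) (μN : Fin n → Option (Fin p))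
    (μM : Fin p → Option (Fin n)) (i : Fin n) (c : Fin p) : Prop :=
  O.sRank i (some c) < O.sRank i (μN i) ∧ O.pRank c (some i) < O.pRank c (μM c)

/-- Individual rationality. -/
def OOIR (O : OOMarket n p) (μN : Fin n → Option (Fin p))
    (μM : Fin p → Option (Fin n)) : Prop :=
  (∀ i, ¬ O.sRank i none < O.sRank i (μN i)) ∧ (∀ c, ¬ O.pRank c none < O.pRank c (μM c))

/-- Stability. -/
def OOStable (O : OOMarket n p) (μN : Fin n → Option (Fin p))
    (μM : Fin p → Option (Fin n)) : Prop :=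
  O.OOIR μN μM ∧ ∀ i c, ¬ O.OOBlocks μN μM i c

/-- Simplicity: individually rational and every blocking pair involves an
unmatched student. -/
def OOSimple (O : OOMarket n p) (μN : Fin n → Option (Fin p))
    (μM : Fin p → Option (Fin n)) : Prop :=
  O.OOIR μN μM ∧ ∀ i c, O.OOBlocks μN μM i c → μN i = none

/-- 1-simplicity: simple, and either stable or there is one and only one
student belonging to every blocking pair. -/
def OOOneSimple (O : OOMarket n p) (μN : Fin n → Option (Fin p))
    (μM : Fin p → Option (Fin n)) : Prop :=
  O.OOSimple μN μM ∧
    (O.OOStable μN μM ∨ ∃! i : Fin n, ∀ i' c, O.OOBlocks μN μM i' c → i' = i)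

end OOMarket

end

/-!
Along the re-stabilization path from `μi` every matching satisfies an invariant: each student
either weakly prefers it to the SOSM `μs`, or blocks it with a college weakly preferred to their
`μs`-college. Initially this holds because removing student `i` can only help the others (the
student-wise join of `μi` and `μs` is stable in the market without `i`), and then `i`, being
unmatched while everybody else weakly prefers `μi` to `μs`, blocks `μi` with their `μs`-college.
A step of `T` gives the unique blocking student their favourite blocking college, which by the
invariant is weakly above their `μs`-college; if that college was full, its worst student is
ejected and, for the same reason as `i`, blocks with their `μs`-college. At the stable fixed
point nobody blocks, so every student weakly prefers it to `μs`, and student-optimality of `μs`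
forces equality.
-/

namespace Finset

variable {ι κ : Type*}

theorem exists_mem_notMem_of_card_le {s t : Finset ι} {a : ι} (h : s.card ≤ t.card)
    (has : a ∈ s) (hat : a ∉ t) : ∃ b ∈ t, b ∉ s := by
  obtain ⟨b, hbt, hb⟩ := exists_mem_notMem_of_card_lt_card (s := s.erase a) (t := t)
    (by rw [card_erase_of_mem has]; have := card_pos.2 ⟨a, has⟩; omega)
  exact ⟨b, hbt, fun hbs => hb (mem_erase.2 ⟨fun hba => hat (hba ▸ hbt), hbs⟩)⟩

theorem card_filter_eq_some_eq_of_le [Fintype κ] [DecidableEq κ] (D : Finset ι)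
    (f g : ι → Option κ) (hf : ∀ x ∈ D, f x ≠ none)
    (hle : ∀ k, (D.filter fun x => f x = some k).card ≤ (D.filter fun x => g x = some k).card)
    (k : κ) :
    (D.filter fun x => f x = some k).card = (D.filter fun x => g x = some k).card := by
  have hsplit : ∀ h : ι → Option κ, D.card =
      (D.filter fun x => h x = none).card + ∑ k, (D.filter fun x => h x = some k).card :=
    fun h => by
      rw [card_eq_sum_card_fiberwise (t := (univ : Finset (Option κ))) (by simp),
        Fintype.sum_option]
  have hfnone : (D.filter fun x => f x = none).card = 0 := by
    simpa [filter_eq_empty_iff] using hf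
  have hsum : ∑ k, (D.filter fun x => f x = some k).card =
      ∑ k, (D.filter fun x => g x = some k).card := by
    refine le_antisymm (sum_le_sum fun k _ => hle k) ?_
    have := hsplit f; have := hsplit g; omega
  exact (sum_eq_sum_iff_of_le fun k _ => hle k).1 hsum k (mem_univ k)

end Finset

namespace Market

open Finset Function

variable {n m : ℕ} {M : Market n m} {μ ν μs : Fin n → Option (Fin m)} {x y : Fin n}
  {j : Fin m}

@[simp]
theorem mem_assigned : x ∈ M.assigned μ j ↔ μ x = some j := by
  simp [assigned]

theorem sPref_of_not_sPref {a b : Option (Fin m)} (h : ¬ M.sPref x a b) (hne : a ≠ b) :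
    M.sPref x b a :=
  lt_of_le_of_ne (not_lt.1 h) fun he => hne (M.sRank_inj x he).symm

theorem cPref_of_not_cPref {a b : Option (Fin n)} (h : ¬ M.cPref j a b) (hne : a ≠ b) :
    M.cPref j b a :=
  lt_of_le_of_ne (not_lt.1 h) fun he => hne (M.cRank_inj j he).symm

theorem IndRational.cPref_none (h : M.IndRational μ) (hx : μ x = some j) :
    M.cPref j (some x) none :=
  cPref_of_not_cPref (h.2 j x hx) (by simp)

theorem Blocks.cPref_none (hir : M.IndRational μ) (h : M.Blocks μ x j) :
    M.cPref j (some x) none := by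
  rcases h.2 with ⟨-, hacc⟩ | ⟨-, y, hy, hxy⟩
  · exact hacc
  · exact lt_trans hxy (hir.cPref_none (mem_assigned.1 hy))

theorem Blocks.of_mem (hm : M.IsMatching μ) (hy : y ∈ M.assigned μ j)
    (hyacc : M.cPref j (some y) none) (hx : M.sPref x (some j) (μ x))
    (hxy : M.cPref j (some x) (some y)) : M.Blocks μ x j := by
  refine ⟨hx, ?_⟩
  rcases (hm j).lt_or_eq with hlt | hfull
  · exact Or.inl ⟨hlt, lt_trans hxy hyacc⟩
  · exact Or.inr ⟨hfull, y, hy, hxy⟩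

theorem Blocks.of_assigned_eq (h : M.Blocks ν x j) (hj : M.assigned ν j = M.assigned μ j)
    (hx : M.sRank x (ν x) ≤ M.sRank x (μ x)) : M.Blocks μ x j :=
  ⟨lt_of_lt_of_le h.1 hx, hj ▸ h.2⟩

theorem card_eq_quota_and_cPref_of_not_blocks (hm : M.IsMatching μ)
    (hx : M.sPref x (some j) (μ x)) (hacc : M.cPref j (some x) none) (hnb : ¬ M.Blocks μ x j) :
    (M.assigned μ j).card = M.quota j ∧
      ∀ y ∈ M.assigned μ j, M.cPref j (some y) (some x) := by
  have hfull : (M.assigned μ j).card = M.quota j :=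
    (hm j).eq_of_not_lt fun hlt => hnb ⟨hx, Or.inl ⟨hlt, hacc⟩⟩
  refine ⟨hfull, fun y hy =>
    cPref_of_not_cPref (fun hxy => hnb ⟨hx, Or.inr ⟨hfull, y, hy, hxy⟩⟩) ?_⟩
  rintro ⟨⟩
  exact lt_irrefl _ (mem_assigned.1 hy ▸ hx)

theorem StableAway.indRational {i : Fin n} (h : M.StableAway i μ) : M.IndRational μ := by
  refine ⟨fun x => ?_, fun j x hx => h.2.2.1 j x ?_ hx⟩
  · by_cases hx : x = i
    · subst hx; rw [h.1]; exact lt_irrefl _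
    · exact h.2.1 x hx
  · rintro rfl; simp [h.1] at hx

section StudentJoin

variable {i : Fin n} {α β : Fin n → Option (Fin m)}

variable (M) in
noncomputable def gainers (i : Fin n) (α β : Fin n → Option (Fin m)) : Finset (Fin n) :=
  univ.filter fun x => x ≠ i ∧ M.sPref x (β x) (α x)

variable (M) in
noncomputable def studentJoin (i : Fin n) (α β : Fin n → Option (Fin m)) :
    Fin n → Option (Fin m) :=
  fun x => if x ∈ M.gainers i α β then β x else α x

theorem mem_gainers : x ∈ M.gainers i α β ↔ x ≠ i ∧ M.sPref x (β x) (α x) := by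
  simp [gainers]

theorem sRank_studentJoin_le_left :
    M.sRank x (M.studentJoin i α β x) ≤ M.sRank x (α x) := by
  unfold studentJoin; split_ifs with h
  · exact (mem_gainers.1 h).2.le
  · exact le_rfl

theorem sRank_studentJoin_le_right (hx : x ≠ i) :
    M.sRank x (M.studentJoin i α β x) ≤ M.sRank x (β x) := by
  unfold studentJoin; split_ifs with h
  · exact le_rfl
  · exact not_lt.1 fun hlt => h (mem_gainers.2 ⟨hx, hlt⟩)

theorem assigned_studentJoin (k : Fin m) : M.assigned (M.studentJoin i α β) k =
    (M.assigned α k \ M.gainers i α β) ∪ (M.assigned β k ∩ M.gainers i α β) := by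
  ext x
  by_cases hx : x ∈ M.gainers i α β <;> simp [studentJoin, hx]

theorem card_assigned_inter_gainers_le (hαm : M.IsMatching α) (hα : M.StableAway i α)
    (hβm : M.IsMatching β) (hβ : M.Stable β) (k : Fin m) :
    (M.assigned β k ∩ M.gainers i α β).card ≤
      (M.assigned α k ∩ M.gainers i α β).card := by
  rcases (M.assigned β k ∩ M.gainers i α β).eq_empty_or_nonempty with hempty | ⟨b, hb⟩
  · simp [hempty]
  obtain ⟨hbβ, hbi, hbpref⟩ : β b = some k ∧ b ≠ i ∧ M.sPref b (β b) (α b) := by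
    simpa [mem_gainers] using hb
  obtain ⟨hfull, hbetter⟩ := card_eq_quota_and_cPref_of_not_blocks hαm (hbβ ▸ hbpref)
    (hβ.1.cPref_none hbβ) (hα.2.2.2 b k hbi)
  calc (M.assigned β k ∩ M.gainers i α β).card
      ≤ (M.assigned β k \ M.assigned α k).card := by
        refine card_le_card fun x hx => ?_
        obtain ⟨hxβ, -, hxpref⟩ : β x = some k ∧ x ≠ i ∧ M.sPref x (β x) (α x) := by
          simpa [mem_gainers] using hx
        refine mem_sdiff.2 ⟨mem_assigned.2 hxβ, fun hxα => ?_⟩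
        rw [hxβ, mem_assigned.1 hxα] at hxpref
        exact lt_irrefl _ hxpref
    _ ≤ (M.assigned α k \ M.assigned β k).card :=
        card_sdiff_le_card_sdiff_iff.2 (hfull ▸ hβm k)
    _ ≤ (M.assigned α k ∩ M.gainers i α β).card := by
        -- a student of `k` under `α` only, not gaining from `β`, would block `β` at `k`
        refine card_le_card fun x hx => ?_
        obtain ⟨hxα, hxβ⟩ : α x = some k ∧ β x ≠ some k := by simpa using hx
        have hxi : x ≠ i := by rintro rfl; simp [hα.1] at hxα
        refine mem_inter.2 ⟨mem_assigned.2 hxα, mem_gainers.2 ⟨hxi, ?_⟩⟩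
        by_contra hxpref
        have hxk : M.sPref x (some k) (β x) := hxα ▸ sPref_of_not_sPref hxpref (hxα ▸ hxβ)
        exact hβ.2 x k (Blocks.of_mem hβm (mem_assigned.2 hbβ) (hβ.1.cPref_none hbβ) hxk
          (hbetter x (mem_assigned.2 hxα)))

theorem card_assigned_studentJoin (hαm : M.IsMatching α) (hα : M.StableAway i α)
    (hβm : M.IsMatching β) (hβ : M.Stable β) (k : Fin m) :
    (M.assigned (M.studentJoin i α β) k).card = (M.assigned α k).card := by
  have hfiber : ∀ (γ : Fin n → Option (Fin m)) k, M.assigned γ k ∩ M.gainers i α β =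
      (M.gainers i α β).filter fun x => γ x = some k := fun γ k => by
    ext x; simp [and_comm]
  have hβmatched : ∀ x ∈ M.gainers i α β, β x ≠ none := fun x hx hβx => by
    obtain ⟨hxi, hxpref⟩ := mem_gainers.1 hx
    exact hα.2.1 x hxi (hβx ▸ hxpref)
  have hcard := (M.gainers i α β).card_filter_eq_some_eq_of_le β α hβmatched
    (fun k => by simpa only [hfiber] using card_assigned_inter_gainers_le hαm hα hβm hβ k) k
  rw [assigned_studentJoin,
    card_union_of_disjoint (disjoint_sdiff_self_left.mono_right inter_subset_right), hfiber,
    hcard, ← hfiber, card_sdiff_add_card_inter]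

theorem stableAway_studentJoin (hαm : M.IsMatching α) (hα : M.StableAway i α)
    (hβm : M.IsMatching β) (hβ : M.Stable β) :
    M.IsMatching (M.studentJoin i α β) ∧ M.StableAway i (M.studentJoin i α β) := by
  have hcard := card_assigned_studentJoin hαm hα hβm hβ
  have hcases : ∀ x, M.studentJoin i α β x = α x ∨
      (M.studentJoin i α β x = β x ∧ x ∈ M.gainers i α β) := fun x => by
    unfold studentJoin; split_ifs with h <;> simp [h]
  have hαir := hα.indRational
  refine ⟨fun k => hcard k ▸ hαm k, ?_, fun x hx => ?_, fun k x hx hxk => ?_,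
    fun x k hx hb => ?_⟩
  · simp [studentJoin, mem_gainers, hα.1]
  · rcases hcases x with h | ⟨h, -⟩ <;> rw [h]
    exacts [hαir.1 x, hβ.1.1 x]
  · rcases hcases x with h | ⟨h, -⟩ <;> rw [h] at hxk
    exacts [hαir.2 k x hxk, hβ.1.2 k x hxk]
  have hxα : M.sPref x (some k) (α x) := lt_of_lt_of_le hb.1 sRank_studentJoin_le_left
  have hxβ : M.sPref x (some k) (β x) := lt_of_lt_of_le hb.1 (sRank_studentJoin_le_right hx)
  rcases hb.2 with ⟨hlt, hacc⟩ | ⟨-, y, hy, hxy⟩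
  · exact hα.2.2.2 x k hx ⟨hxα, Or.inl ⟨hcard k ▸ hlt, hacc⟩⟩
  rw [assigned_studentJoin] at hy
  rcases mem_union.1 hy with hyα | hyβ
  · have hy' := (mem_sdiff.1 hyα).1
    exact hα.2.2.2 x k hx
      (Blocks.of_mem hαm hy' (hαir.cPref_none (mem_assigned.1 hy')) hxα hxy)
  · have hy' := (mem_inter.1 hyβ).1
    exact hβ.2 x k (Blocks.of_mem hβm hy' (hβ.1.cPref_none (mem_assigned.1 hy')) hxβ hxy)

end StudentJoin

theorem IsSOSMAway.sRank_le {i : Fin n} {μi : Fin n → Option (Fin m)}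
    (hi : M.IsSOSMAway i μi) (hs : M.IsSOSM μs) (hx : x ≠ i) :
    M.sRank x (μi x) ≤ M.sRank x (μs x) := by
  obtain ⟨hm, hst⟩ := stableAway_studentJoin hi.1 hi.2.1 hs.1 hs.2.1
  exact (hi.2.2 _ hm hst x hx).trans (sRank_studentJoin_le_right hx)

theorem Stable.oneEnvyFree (h : M.Stable μ) : M.OneEnvyFree μ :=
  ⟨⟨h.1, fun x j hb => (h.2 x j hb).elim⟩, Or.inl h⟩

theorem oneEnvyFree_of_blocks_eq (hir : M.IndRational μ) (hx : μ x = none)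
    (hb : ∀ y j, M.Blocks μ y j → y = x) : M.OneEnvyFree μ := by
  refine ⟨⟨hir, fun y j h => hb y j h ▸ hx⟩, ?_⟩
  by_cases hst : ∃ y j, M.Blocks μ y j
  · obtain ⟨y, j, h⟩ := hst
    exact Or.inr ⟨x, hb, fun x' hx' => (hx' y j h).symm.trans (hb y j h)⟩
  · simp only [not_exists] at hst
    exact Or.inl ⟨hir, hst⟩

theorem StableAway.oneEnvyFree {i : Fin n} (h : M.StableAway i μ) : M.OneEnvyFree μ :=
  oneEnvyFree_of_blocks_eq h.indRational h.1 fun x j hb => by_contra fun hx => h.2.2.2 x j hx hb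

theorem Stable.blocks_of_sRank_le (hsm : M.IsMatching μs) (hs : M.Stable μs)
    (hm : M.IsMatching ν) (hνx : ν x = none) (hx : μs x = some j)
    (hle : ∀ y, y ≠ x → M.sRank y (ν y) ≤ M.sRank y (μs y)) : M.Blocks ν x j := by
  by_contra hnb
  have hpref : M.sPref x (some j) (ν x) :=
    hνx ▸ sPref_of_not_sPref (hx ▸ hs.1.1 x) (by simp)
  obtain ⟨hfull, hbetter⟩ :=
    card_eq_quota_and_cPref_of_not_blocks hm hpref (hs.1.cPref_none hx) hnb
  -- `j` holds at most as many students under `μs` as under `ν`, and `x` is one of them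
  obtain ⟨y, hyν, hyμs⟩ := exists_mem_notMem_of_card_le (s := M.assigned μs j)
    (hfull ▸ hsm j) (mem_assigned.2 hx) (by simp [hνx])
  have hyx : y ≠ x := by rintro rfl; simp [hνx] at hyν
  have hy : M.sPref y (some j) (μs y) := by
    refine lt_of_le_of_ne (mem_assigned.1 hyν ▸ hle y hyx) fun h => hyμs ?_
    exact mem_assigned.2 (M.sRank_inj y h).symm
  exact hs.2 y j (Blocks.of_mem hsm (mem_assigned.2 hx) (hs.1.cPref_none hx) hy
    (hbetter y hyν))

variable (M) in
def WeaklyBetterOrBlocks (μs μ : Fin n → Option (Fin m)) : Prop :=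
  ∀ x, M.sRank x (μ x) ≤ M.sRank x (μs x) ∨
    ∃ j, M.Blocks μ x j ∧ M.sRank x (some j) ≤ M.sRank x (μs x)

theorem WeaklyBetterOrBlocks.sRank_le (h : M.WeaklyBetterOrBlocks μs μ)
    (hx : ∀ j, ¬ M.Blocks μ x j) : M.sRank x (μ x) ≤ M.sRank x (μs x) :=
  (h x).resolve_right fun ⟨j, hb, _⟩ => hx j hb

theorem WeaklyBetterOrBlocks.sRank_le_of_studentMaxBlock (h : M.WeaklyBetterOrBlocks μs μ)
    (hx : M.StudentMaxBlock μ x j) : M.sRank x (some j) ≤ M.sRank x (μs x) := by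
  rcases h x with hle | ⟨j', hb, hle⟩
  · exact hx.1.1.le.trans hle
  · exact (hx.2 j' hb).trans hle

theorem weaklyBetterOrBlocks_of_sRank_le (hsm : M.IsMatching μs) (hs : M.Stable μs)
    (hm : M.IsMatching ν) (hνx : ν x = none)
    (hle : ∀ y, y ≠ x → M.sRank y (ν y) ≤ M.sRank y (μs y)) :
    M.WeaklyBetterOrBlocks μs ν := by
  intro y
  by_cases hy : y = x
  · subst hy
    cases hx : μs y with
    | none => exact Or.inl (by rw [hνx])
    | some j => exact Or.inr ⟨j, hs.blocks_of_sRank_le hsm hm hνx hx hle, le_rfl⟩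
  · exact Or.inl (hle y hy)

theorem IsSOSMAway.weaklyBetterOrBlocks {i : Fin n} {μi : Fin n → Option (Fin m)}
    (hi : M.IsSOSMAway i μi) (hs : M.IsSOSM μs) : M.WeaklyBetterOrBlocks μs μi :=
  weaklyBetterOrBlocks_of_sRank_le hs.1 hs.2.1 hi.1 hi.2.1.1 fun _ hx => hi.sRank_le hs hx

theorem IsSOSM.eq_of_weaklyBetterOrBlocks (hs : M.IsSOSM μs) (hm : M.IsMatching ν)
    (hν : M.Stable ν) (h : M.WeaklyBetterOrBlocks μs ν) : μs = ν :=
  funext fun x => M.sRank_inj x <|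
    le_antisymm (hs.2.2 ν hm hν x) (h.sRank_le fun j => hν.2 x j)

theorem Blocks.cPref_of_card_eq {w : Fin n} (hb : M.Blocks μ x j)
    (hfull : (M.assigned μ j).card = M.quota j)
    (hworst : ∀ y ∈ M.assigned μ j, y ≠ w → M.cPref j (some y) (some w)) :
    M.cPref j (some x) (some w) := by
  obtain ⟨z, hz, hxz⟩ := (hb.2.resolve_left fun h => h.1.ne hfull).2
  rcases eq_or_ne z w with rfl | hzw
  · exact hxz
  · exact lt_trans hxz (hworst z hz hzw)

theorem exists_studentMaxBlock (h : M.Blocks μ x j) : ∃ j', M.StudentMaxBlock μ x j' := by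
  obtain ⟨j', hj', hmin⟩ := (univ.filter (M.Blocks μ x)).exists_min_image
    (fun j => M.sRank x (some j)) ⟨j, by simpa using h⟩
  exact ⟨j', by simpa using hj', fun j'' h'' => hmin j'' (by simpa using h'')⟩

theorem exists_cWorst (j : Fin m) {A : Finset (Fin n)} (hA : A.Nonempty) :
    ∃ w ∈ A, ∀ x ∈ A, x ≠ w → M.cPref j (some x) (some w) := by
  obtain ⟨w, hw, hmax⟩ := A.exists_max_image (fun x => M.cRank j (some x)) hA
  exact ⟨w, hw, fun x hx hne =>
    lt_of_le_of_ne (hmax x hx) fun h => hne (Option.some_injective _ (M.cRank_inj j h))⟩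

theorem assigned_update_self (μ : Fin n → Option (Fin m)) (x : Fin n) (j : Fin m) :
    M.assigned (update μ x (some j)) j = insert x (M.assigned μ j) := by
  ext y; by_cases hy : y = x <;> simp [hy]

theorem assigned_update_of_ne {o : Option (Fin m)} (μ : Fin n → Option (Fin m)) (x : Fin n)
    (ho : o ≠ some j) : M.assigned (update μ x o) j = (M.assigned μ j).erase x := by
  ext y; by_cases hy : y = x <;> simp [hy, ho]

theorem IsMatching.update_none (hm : M.IsMatching μ) (x : Fin n) :
    M.IsMatching (update μ x none) := fun k => by
  rw [assigned_update_of_ne μ x (by simp)]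
  exact card_erase_le.trans (hm k)

theorem IsMatching.update_some (hm : M.IsMatching μ) (x : Fin n)
    (hj : (M.assigned μ j).card < M.quota j) : M.IsMatching (update μ x (some j)) := fun k => by
  by_cases hk : k = j
  · subst hk
    rw [assigned_update_self]
    exact (card_insert_le _ _).trans hj
  · rw [assigned_update_of_ne μ x (by simpa [eq_comm] using hk)]
    exact card_erase_le.trans (hm k)

theorem IndRational.update_none (h : M.IndRational μ) (x : Fin n) :
    M.IndRational (update μ x none) := by
  refine ⟨fun y => ?_, fun k y hy => ?_⟩
  · by_cases hy : y = x
    · subst hy; rw [update_self]; exact lt_irrefl _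
    · rw [update_of_ne hy]; exact h.1 y
  · have hyx : y ≠ x := by rintro rfl; simp at hy
    rw [update_of_ne hyx] at hy
    exact h.2 k y hy

theorem IndRational.update_some (h : M.IndRational μ) (hx : M.sPref x (some j) none)
    (hj : M.cPref j (some x) none) : M.IndRational (update μ x (some j)) := by
  refine ⟨fun y => ?_, fun k y hy => ?_⟩
  · by_cases hy : y = x
    · subst hy; rw [update_self]; exact lt_asymm hx
    · rw [update_of_ne hy]; exact h.1 y
  · by_cases hyx : y = x
    · subst hyx
      obtain rfl : j = k := by simpa using hy
      exact lt_asymm hj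
    · rw [update_of_ne hyx] at hy
      exact h.2 k y hy

section Step

variable {T : (Fin n → Option (Fin m)) → Fin n → Option (Fin m)} {i0 i1 : Fin n} {j0 : Fin m}

theorem IsTStep.stable_of_apply_eq (hT : M.IsTStep T) (hm : M.IsMatching μ)
    (he : M.OneEnvyFree μ) (hfix : T μ = μ) : M.Stable μ := by
  refine ⟨he.1.1, fun x j hb => ?_⟩
  obtain ⟨j', hj'⟩ := exists_studentMaxBlock hb
  have hx : μ x = some j' := hfix ▸ ((hT μ hm he).2 x j' hj').1
  exact lt_irrefl _ (hx ▸ hj'.1.1)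

theorem IsTStep.apply_eq_update_of_card_lt (hT : M.IsTStep T) (hm : M.IsMatching μ)
    (he : M.OneEnvyFree μ) (hsmb : M.StudentMaxBlock μ i0 j0)
    (hlt : (M.assigned μ j0).card < M.quota j0) : T μ = update μ i0 (some j0) := by
  obtain ⟨h0, hrest⟩ := (hT μ hm he).2 i0 j0 hsmb
  funext x
  by_cases hx : x = i0
  · subst hx; rw [update_self, h0]
  rw [update_of_ne hx]
  by_cases hxj : μ x = some j0
  · exact ((hrest x hx).2 hxj).1 hlt
  · exact (hrest x hx).1 hxj

theorem IsTStep.apply_eq_update_of_card_eq (hT : M.IsTStep T) (hm : M.IsMatching μ)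
    (he : M.OneEnvyFree μ) (hsmb : M.StudentMaxBlock μ i0 j0)
    (hfull : (M.assigned μ j0).card = M.quota j0) (hi1 : i1 ∈ M.assigned μ j0)
    (hworst : ∀ x ∈ M.assigned μ j0, x ≠ i1 → M.cPref j0 (some x) (some i1)) :
    T μ = update (update μ i1 none) i0 (some j0) := by
  obtain ⟨h0, hrest⟩ := (hT μ hm he).2 i0 j0 hsmb
  funext x
  by_cases hx0 : x = i0
  · subst hx0; rw [update_self, h0]
  rw [update_of_ne hx0]
  by_cases hx1 : x = i1
  · subst hx1
    rw [update_self]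
    exact (((hrest x hx0).2 (mem_assigned.1 hi1)).2 hfull).2 hworst
  rw [update_of_ne hx1]
  by_cases hxj : μ x = some j0
  · exact (((hrest x hx0).2 hxj).2 hfull).1 ⟨i1, hi1, hworst x (mem_assigned.2 hxj) hx1⟩
  · exact (hrest x hx0).1 hxj

theorem StudentMaxBlock.not_blocks (hsmb : M.StudentMaxBlock μ i0 j0) (hν : ν i0 = some j0)
    (hassigned : ∀ k, k ≠ j0 → M.assigned ν k = M.assigned μ k) (k : Fin m) :
    ¬ M.Blocks ν i0 k := by
  intro hb
  have hk : M.sPref i0 (some k) (some j0) := hν ▸ hb.1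
  have hkj : k ≠ j0 := by rintro rfl; exact lt_irrefl _ hk
  exact not_lt.2 (hsmb.2 k (hb.of_assigned_eq (hassigned k hkj) (hν ▸ hsmb.1.1.le))) hk

theorem stable_update_of_card_lt (hir : M.IndRational μ) (hnone : μ i0 = none)
    (hi0 : ∀ x j, M.Blocks μ x j → x = i0) (hsmb : M.StudentMaxBlock μ i0 j0)
    (hlt : (M.assigned μ j0).card < M.quota j0) : M.Stable (update μ i0 (some j0)) := by
  have hassigned : ∀ k, k ≠ j0 → M.assigned (update μ i0 (some j0)) k = M.assigned μ k :=
    fun k hk => by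
      rw [assigned_update_of_ne μ i0 (by simpa [eq_comm] using hk), erase_eq_of_notMem]
      simp [hnone]
  have hir' := hir.update_some (hnone ▸ hsmb.1.1) (hsmb.1.cPref_none hir)
  refine ⟨hir', fun x k hb => ?_⟩
  by_cases hx : x = i0
  · subst hx; exact hsmb.not_blocks (update_self ..) hassigned k hb
  have hνx : update μ i0 (some j0) x = μ x := update_of_ne hx ..
  refine hx (hi0 x k ?_)
  by_cases hk : k = j0
  · subst hk; exact ⟨hνx ▸ hb.1, Or.inl ⟨hlt, hb.cPref_none hir'⟩⟩
  · exact hb.of_assigned_eq (hassigned k hk) (by rw [hνx])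

theorem blocks_update_update_eq (hm : M.IsMatching μ) (hir : M.IndRational μ)
    (hnone : μ i0 = none) (hi0 : ∀ x j, M.Blocks μ x j → x = i0)
    (hsmb : M.StudentMaxBlock μ i0 j0) (hfull : (M.assigned μ j0).card = M.quota j0)
    (hi1 : i1 ∈ M.assigned μ j0)
    (hworst : ∀ x ∈ M.assigned μ j0, x ≠ i1 → M.cPref j0 (some x) (some i1))
    (x : Fin n) (k : Fin m)
    (hb : M.Blocks (update (update μ i1 none) i0 (some j0)) x k) : x = i1 := by
  have hi1μ : μ i1 = some j0 := mem_assigned.1 hi1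
  have hassigned : ∀ k, k ≠ j0 →
      M.assigned (update (update μ i1 none) i0 (some j0)) k = M.assigned μ k := fun k hk => by
    rw [assigned_update_of_ne _ _ (by simpa [eq_comm] using hk),
      assigned_update_of_ne _ _ (by simp), erase_eq_of_notMem (by simp [hnone]),
      erase_eq_of_notMem (by simpa [hi1μ] using hk.symm)]
  by_contra hx1
  by_cases hx0 : x = i0
  · subst hx0; exact hsmb.not_blocks (update_self ..) hassigned k hb
  have hνx : update (update μ i1 none) i0 (some j0) x = μ x := by
    rw [update_of_ne hx0, update_of_ne hx1]
  refine hx0 (hi0 x k ?_)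
  by_cases hk : k = j0
  swap
  · exact hb.of_assigned_eq (hassigned k hk) (by rw [hνx])
  subst hk
  -- `k` is full under the new matching too, so `x` beats one of its students, hence `i1`
  have hcard : (M.assigned (update (update μ i1 none) i0 (some k)) k).card = M.quota k := by
    rw [assigned_update_self, assigned_update_of_ne _ _ (by simp),
      card_insert_of_notMem (by simp [hnone]), card_erase_add_one hi1, hfull]
  refine Blocks.of_mem hm hi1 (hir.cPref_none hi1μ) (hνx ▸ hb.1)
    (hb.cPref_of_card_eq hcard fun y hy _ => ?_)
  rw [assigned_update_self, assigned_update_of_ne _ _ (by simp)] at hy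
  rcases mem_insert.1 hy with rfl | hy
  · exact hsmb.1.cPref_of_card_eq hfull hworst
  · exact hworst y (mem_erase.1 hy).2 (mem_erase.1 hy).1

theorem IsTStep.preserves (hT : M.IsTStep T) (hsm : M.IsMatching μs) (hs : M.Stable μs)
    (hm : M.IsMatching μ) (he : M.OneEnvyFree μ) (hW : M.WeaklyBetterOrBlocks μs μ) :
    M.IsMatching (T μ) ∧ M.OneEnvyFree (T μ) ∧ M.WeaklyBetterOrBlocks μs (T μ) := by
  by_cases hst : M.Stable μ
  · rw [(hT μ hm he).1 hst.2]; exact ⟨hm, he, hW⟩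
  obtain ⟨i0, hi0, -⟩ := he.2.resolve_left hst
  obtain ⟨x, j, hb⟩ : ∃ x j, M.Blocks μ x j := by
    by_contra h
    simp only [not_exists] at h
    exact hst ⟨he.1.1, h⟩
  obtain ⟨j0, hsmb⟩ := exists_studentMaxBlock (hi0 x j hb ▸ hb)
  have hnone : μ i0 = none := he.1.2 i0 j0 hsmb.1
  have hle : ∀ y, y ≠ i0 → M.sRank y (μ y) ≤ M.sRank y (μs y) :=
    fun y hy => hW.sRank_le fun k hk => hy (hi0 y k hk)
  have hle0 := hW.sRank_le_of_studentMaxBlock hsmb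
  rcases (hm j0).lt_or_eq with hlt | hfull
  · rw [hT.apply_eq_update_of_card_lt hm he hsmb hlt]
    refine ⟨hm.update_some i0 hlt,
      (stable_update_of_card_lt he.1.1 hnone hi0 hsmb hlt).oneEnvyFree, fun y => Or.inl ?_⟩
    by_cases hy : y = i0
    · subst hy; rw [update_self]; exact hle0
    · rw [update_of_ne hy]; exact hle y hy
  obtain ⟨y0, hy0, -⟩ := (hsmb.1.2.resolve_left fun h => h.1.ne hfull).2
  obtain ⟨i1, hi1, hworst⟩ := M.exists_cWorst j0 ⟨y0, hy0⟩
  have hi10 : i1 ≠ i0 := by rintro rfl; simp [hnone] at hi1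
  have hν1 : update (update μ i1 none) i0 (some j0) i1 = none := by
    rw [update_of_ne hi10, update_self]
  have hvac : (M.assigned (update μ i1 none) j0).card < M.quota j0 := by
    rw [assigned_update_of_ne μ i1 (by simp), ← hfull]
    exact card_erase_lt_of_mem hi1
  have hm' := (hm.update_none i1).update_some i0 hvac
  have hir' := (he.1.1.update_none i1).update_some (hnone ▸ hsmb.1.1) (hsmb.1.cPref_none he.1.1)
  rw [hT.apply_eq_update_of_card_eq hm he hsmb hfull hi1 hworst]
  refine ⟨hm', oneEnvyFree_of_blocks_eq hir' hν1
    (blocks_update_update_eq hm he.1.1 hnone hi0 hsmb hfull hi1 hworst),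
    weaklyBetterOrBlocks_of_sRank_le hsm hs hm' hν1 fun y hy1 => ?_⟩
  by_cases hy0 : y = i0
  · subst hy0; rw [update_self]; exact hle0
  · rw [update_of_ne hy0, update_of_ne hy1]; exact hle y hy0

theorem IsTStep.iterate_preserves (hT : M.IsTStep T) (hsm : M.IsMatching μs)
    (hs : M.Stable μs) (hm : M.IsMatching μ) (he : M.OneEnvyFree μ)
    (hW : M.WeaklyBetterOrBlocks μs μ) (r : ℕ) :
    M.IsMatching (T^[r] μ) ∧ M.OneEnvyFree (T^[r] μ) ∧
      M.WeaklyBetterOrBlocks μs (T^[r] μ) := by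
  induction r with
  | zero => exact ⟨hm, he, hW⟩
  | succ r ih =>
    rw [iterate_succ_apply']
    exact hT.preserves hsm hs ih.1 ih.2.1 ih.2.2

end Step

end Market

/-- re-stabilizing the SOSM of the market without student `i`
(after reintroducing `i` as unmatched) yields the SOSM of the full market:
`μ*(·, u) = T*(g_i(μ*_i(·, u_{-i})))`. -/
theorem sosm_eq_restabilized_sosm_away {n m : ℕ} (M : Market n m)
    (T Tstar : (Fin n → Option (Fin m)) → Fin n → Option (Fin m))
    (hT : M.IsTStep T) (hTs : M.IsTStarOf T Tstar)
    (i : Fin n) (μi μs : Fin n → Option (Fin m))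
    (hi : M.IsSOSMAway i μi) (hs : M.IsSOSM μs) :
    μs = Tstar μi := by
  have he := hi.2.1.oneEnvyFree
  obtain ⟨r, hr, hfix⟩ := hTs μi hi.1 he
  obtain ⟨hm, hoef, hW⟩ :=
    hT.iterate_preserves hs.1 hs.2.1 hi.1 he (hi.weaklyBetterOrBlocks hs) r
  rw [← hr] at hm hoef hW
  exact hs.eq_of_weaklyBetterOrBlocks hm (hT.stable_of_apply_eq hm hoef hfix) hW
end

section
/- Displacement relation is a bijection on changed students: let μ be a stable matching, μ* the SOSM, and for students a, b in N^H(μ) = {i : μ(i) ≠ μ*(i, u)}, say a ▷_j b if a ∈ μ⁻¹(j) \ μ*⁻¹(j, u), b ∈ μ*⁻¹(j, u) \ μ⁻¹(j), and a and b have the same rank within their respective sets according to ≻_j. Then every i₁ ∈ N^H(μ) is displaced by exactly one student i₀ and displaces exactly one student i₂; moreover if i₀ ≠ i₂, then i₀, i₁, i₂ are three distinct students and i₀ ▷_{j₁} i₁ ▷_{j₂} i₂ for two distinct colleges j₁ ≠ j₂. -/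
attribute [local instance] Classical.propDecidable

noncomputable section AuxLemmas

open Finset

namespace Market

variable {n m : ℕ} (M : Market n m)

lemma rank_lt_of_pref (j : Fin m) (A : Finset (Fin n)) {a b : Fin n}
    (ha : a ∈ A) (hab : M.cPref j (some a) (some b)) :
    M.rankIn j a A < M.rankIn j b A := by
  unfold Market.rankIn
  have hsub : (A.filter fun i' => M.cPref j (some i') (some a)) ⊂
      (A.filter fun i' => M.cPref j (some i') (some b)) := by
    refine ⟨fun x hx => ?_, ?_⟩
    · rcases Finset.mem_filter.1 hx with ⟨hxA, hxa⟩
      exact Finset.mem_filter.2 ⟨hxA, lt_trans hxa hab⟩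
    intro hsub
    have hmem : a ∈ A.filter fun i' => M.cPref j (some i') (some b) :=
      Finset.mem_filter.2 ⟨ha, hab⟩
    exact lt_irrefl _ (Finset.mem_filter.1 (hsub hmem)).2
  have := Finset.card_lt_card hsub
  omega

lemma rank_injOn (j : Fin m) (A : Finset (Fin n)) :
    Set.InjOn (fun a => M.rankIn j a A) A := by
  intro a ha b hb hab
  by_contra hne
  have h : M.cRank j (some a) ≠ M.cRank j (some b) := fun h =>
    hne (Option.some_injective _ (M.cRank_inj j h))
  rcases lt_or_gt_of_ne h with h' | h'
  · exact absurd hab (ne_of_lt (M.rank_lt_of_pref j A ha h'))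
  · exact absurd hab.symm (ne_of_lt (M.rank_lt_of_pref j A hb h'))

lemma rank_le_card (j : Fin m) (A : Finset (Fin n)) {a : Fin n} (ha : a ∈ A) :
    M.rankIn j a A ≤ A.card := by
  unfold Market.rankIn
  have hsub : (A.filter fun i' => M.cPref j (some i') (some a)) ⊂ A := by
    rw [Finset.filter_ssubset]
    exact ⟨a, ha, lt_irrefl _⟩
  have := Finset.card_lt_card hsub
  omega

lemma rank_one_le (j : Fin m) (A : Finset (Fin n)) (a : Fin n) :
    1 ≤ M.rankIn j a A := by
  unfold Market.rankIn; omega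

lemma rank_surj (j : Fin m) (A : Finset (Fin n)) {k : ℕ} (h1 : 1 ≤ k)
    (h2 : k ≤ A.card) : ∃ a ∈ A, M.rankIn j a A = k := by
  classical
  have himg : (A.image fun a => M.rankIn j a A).card = A.card :=
    Finset.card_image_of_injOn (M.rank_injOn j A)
  have hsub : (A.image fun a => M.rankIn j a A) ⊆
      (Finset.range (A.card + 1)).erase 0 := by
    intro x hx
    rcases Finset.mem_image.1 hx with ⟨a, ha, rfl⟩
    have := M.rank_le_card j A ha
    have := M.rank_one_le j A a
    simp only [Finset.mem_erase, Finset.mem_range]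
    omega
  have hcard : ((Finset.range (A.card + 1)).erase 0).card = A.card := by
    rw [Finset.card_erase_of_mem (by simp)]
    simp
  have heq : (A.image fun a => M.rankIn j a A) =
      (Finset.range (A.card + 1)).erase 0 :=
    Finset.eq_of_subset_of_card_le hsub (by omega)
  have hk : k ∈ (A.image fun a => M.rankIn j a A) := by
    rw [heq]
    simp only [Finset.mem_erase, Finset.mem_range]
    omega
  rcases Finset.mem_image.1 hk with ⟨a, ha, hra⟩
  exact ⟨a, ha, hra⟩

lemma rank_exists_unique (j : Fin m) (A B : Finset (Fin n))
    (hcard : A.card = B.card) {b : Fin n} (hb : b ∈ B) :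
    ∃! a : Fin n, a ∈ A ∧ M.rankIn j a A = M.rankIn j b B := by
  have h1 := M.rank_one_le j B b
  have h2 := M.rank_le_card j B hb
  obtain ⟨a, ha, hra⟩ := M.rank_surj j A (k := M.rankIn j b B) h1 (by omega)
  refine ⟨a, ⟨ha, hra⟩, ?_⟩
  rintro a' ⟨ha', hra'⟩
  exact M.rank_injOn j A ha' ha (show M.rankIn j a' A = M.rankIn j a A by rw [hra', hra])

variable {μ μs : Fin n → Option (Fin m)}

lemma sosm_matched (hμ : M.IsMatching μ) (hst : M.Stable μ) (hs : M.IsSOSM μs) :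
    ∀ i, μ i ≠ none → μs i ≠ none := by
  intro i hi hcon
  have hir := hst.1.1 i
  have hlt : M.sRank i (μ i) < M.sRank i none := by
    rcases lt_or_ge (M.sRank i (μ i)) (M.sRank i none) with h | h
    · exact h
    · rcases eq_or_lt_of_le h with h' | h'
      · exact absurd (M.sRank_inj i h'.symm) hi
      · exact absurd h' hir
  have := hs.2.2 μ hμ hst i
  rw [hcon] at this
  omega

lemma sosm_card_le (hμ : M.IsMatching μ) (hst : M.Stable μ) (hs : M.IsSOSM μs) :
    ∀ j, (M.assigned μs j).card ≤ (M.assigned μ j).card := by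
  intro j
  by_contra hlt
  push_neg at hlt
  have hvac : (M.assigned μ j).card < M.quota j := lt_of_lt_of_le hlt (hs.1 j)
  have hex : ∃ i ∈ M.assigned μs j, i ∉ M.assigned μ j := by
    by_contra hcon
    push_neg at hcon
    exact absurd (Finset.card_le_card hcon) (by omega)
  obtain ⟨i, hi1, hi2⟩ := hex
  have hμsi : μs i = some j := (Finset.mem_filter.1 hi1).2
  have hμi : μ i ≠ some j := fun h => hi2 (Finset.mem_filter.2 ⟨Finset.mem_univ _, h⟩)
  have hspref : M.sPref i (some j) (μ i) := by
    have hle : M.sRank i (μs i) ≤ M.sRank i (μ i) := hs.2.2 μ hμ hst i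
    rw [hμsi] at hle
    rcases eq_or_lt_of_le hle with h | h
    · exact absurd (M.sRank_inj i h).symm hμi
    · exact h
  have hcp : M.cPref j (some i) none := by
    have hir := hs.2.1.1.2 j i hμsi
    have hne : M.cRank j (some i) ≠ M.cRank j none := fun h => by
      have := M.cRank_inj j h; simp at this
    rcases lt_or_ge (M.cRank j (some i)) (M.cRank j none) with h | h
    · exact h
    · rcases eq_or_lt_of_le h with h' | h'
      · exact absurd h'.symm hne
      · exact absurd h' hir
  exact hst.2 i j ⟨hspref, Or.inl ⟨hvac, hcp⟩⟩

lemma sum_assigned_card (ν : Fin n → Option (Fin m)) :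
    (Finset.univ.filter fun i => ν i = none).card
      + ∑ j, (M.assigned ν j).card = n := by
  classical
  have h := Finset.card_eq_sum_card_fiberwise
    (s := (Finset.univ : Finset (Fin n)))
    (t := (Finset.univ : Finset (Option (Fin m)))) (f := ν)
    (fun x _ => Finset.mem_univ _)
  rw [Finset.card_univ, Fintype.card_fin] at h
  rw [Fintype.sum_option] at h
  simpa [Market.assigned] using h.symm

lemma sosm_card_eq (hμ : M.IsMatching μ) (hst : M.Stable μ) (hs : M.IsSOSM μs) :
    ∀ j, (M.assigned μs j).card = (M.assigned μ j).card := by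
  have hle := M.sosm_card_le hμ hst hs
  have hm := M.sosm_matched hμ hst hs
  have hsub : (Finset.univ.filter fun i => μs i = none) ⊆
      (Finset.univ.filter fun i => μ i = none) := by
    intro i hi
    simp only [Finset.mem_filter, Finset.mem_univ, true_and] at hi ⊢
    by_contra h
    exact hm i h hi
  have hcard := Finset.card_le_card hsub
  have h1 := M.sum_assigned_card μ
  have h2 := M.sum_assigned_card μs
  have hsums : ∑ j, (M.assigned μs j).card ≤ ∑ j, (M.assigned μ j).card :=
    Finset.sum_le_sum (fun j _ => hle j)
  have hsumeq : ∑ j, (M.assigned μs j).card = ∑ j, (M.assigned μ j).card := by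
    omega
  intro j
  exact (Finset.sum_eq_sum_iff_of_le (fun j _ => hle j)).1 hsumeq j (Finset.mem_univ j)

lemma sosm_unmatched_iff (hμ : M.IsMatching μ) (hst : M.Stable μ)
    (hs : M.IsSOSM μs) : ∀ i, μ i = none ↔ μs i = none := by
  have hm := M.sosm_matched hμ hst hs
  have hsub : (Finset.univ.filter fun i => μs i = none) ⊆
      (Finset.univ.filter fun i => μ i = none) := by
    intro i hi
    simp only [Finset.mem_filter, Finset.mem_univ, true_and] at hi ⊢
    by_contra h
    exact hm i h hi
  have h1 := M.sum_assigned_card μ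
  have h2 := M.sum_assigned_card μs
  have hsumeq : ∑ j, (M.assigned μs j).card = ∑ j, (M.assigned μ j).card :=
    Finset.sum_congr rfl (fun j _ => M.sosm_card_eq hμ hst hs j)
  have hcards : (Finset.univ.filter fun i => μ i = none).card ≤
      (Finset.univ.filter fun i => μs i = none).card := by omega
  have heq := Finset.eq_of_subset_of_card_le hsub hcards
  intro i
  constructor
  · intro hi
    have : i ∈ (Finset.univ.filter fun i => μs i = none) := by
      rw [heq]; simp [hi]
    simpa using this
  · intro hi
    by_contra h
    exact hm i h hi

lemma nset_card_eq (hμ : M.IsMatching μ) (hst : M.Stable μ) (hs : M.IsSOSM μs)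
    (j : Fin m) : (M.Nset1 μ μs j).card = (M.Nset0 μ μs j).card :=
  Finset.card_sdiff_comm (M.sosm_card_eq hμ hst hs j).symm

end Market

end AuxLemmas

/-- the displacement relation on changed students: every student
whose match differs between a stable matching `μ` and the SOSM `μ*` is
displaced by exactly one student and displaces exactly one student; if the
displacer `i₀` and the displaced `i₂` differ, then `i₀, i₁, i₂` are distinct
and `i₀ ▷_{j₁} i₁ ▷_{j₂} i₂` for two distinct colleges. -/
theorem displacement_bijection {n m : ℕ} (M : Market n m)
    (μ μs : Fin n → Option (Fin m))
    (hμ : M.IsMatching μ) (hst : M.Stable μ) (hs : M.IsSOSM μs) :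
    ∀ i₁ : Fin n, μ i₁ ≠ μs i₁ →
      (∃! i₀ : Fin n, M.DisplacesAny μ μs i₀ i₁) ∧
      (∃! i₂ : Fin n, M.DisplacesAny μ μs i₁ i₂) ∧
      (∀ i₀ i₂ : Fin n, M.DisplacesAny μ μs i₀ i₁ → M.DisplacesAny μ μs i₁ i₂ →
        i₀ ≠ i₂ →
        i₀ ≠ i₁ ∧ i₁ ≠ i₂ ∧
        ∃ j₁ j₂ : Fin m, j₁ ≠ j₂ ∧
          M.Displaces μ μs j₁ i₀ i₁ ∧ M.Displaces μ μs j₂ i₁ i₂) := by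
  intro i₁ hne
  -- both μ i₁ and μs i₁ are some
  have hunm := M.sosm_unmatched_iff hμ hst hs i₁
  obtain ⟨j', hj'⟩ : ∃ j', μ i₁ = some j' := by
    cases hμi : μ i₁ with
    | none => exact absurd (hunm.1 hμi) (fun h => hne (by rw [hμi, h]))
    | some j' => exact ⟨j', rfl⟩
  obtain ⟨j, hj⟩ : ∃ j, μs i₁ = some j := by
    cases hμsi : μs i₁ with
    | none => exact absurd (hunm.2 hμsi) (fun h => hne (by rw [hμsi, h]))
    | some j => exact ⟨j, rfl⟩
  have hjj' : j ≠ j' := fun h => hne (by rw [hj', hj, h])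
  have hmem0 : i₁ ∈ M.Nset0 μ μs j := by
    simp only [Market.Nset0, Market.assigned, Finset.mem_sdiff, Finset.mem_filter,
      Finset.mem_univ, true_and]
    exact ⟨hj, by rw [hj']; exact fun h => hjj' (Option.some_injective _ h).symm⟩
  have hmem1 : i₁ ∈ M.Nset1 μ μs j' := by
    simp only [Market.Nset1, Market.assigned, Finset.mem_sdiff, Finset.mem_filter,
      Finset.mem_univ, true_and]
    exact ⟨hj', by rw [hj]; exact fun h => hjj' (Option.some_injective _ h)⟩
  have hcard := M.nset_card_eq hμ hst hs
  -- helper facts about colleges involved in displacements of/by i₁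
  have hcol0 : ∀ j'' a, M.Displaces μ μs j'' a i₁ → j'' = j := by
    intro j'' a hd
    have := (Finset.mem_sdiff.1 hd.2.1).1
    have := (Finset.mem_filter.1 this).2
    rw [hj] at this
    exact (Option.some_injective _ this).symm
  have hcol1 : ∀ j'' b, M.Displaces μ μs j'' i₁ b → j'' = j' := by
    intro j'' b hd
    have := (Finset.mem_sdiff.1 hd.1).1
    have := (Finset.mem_filter.1 this).2
    rw [hj'] at this
    exact (Option.some_injective _ this).symm
  refine ⟨?_, ?_, ?_⟩
  · -- unique displacer
    obtain ⟨a, ⟨ha, hra⟩, huniq⟩ :=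
      M.rank_exists_unique j (M.Nset1 μ μs j) (M.Nset0 μ μs j) (hcard j) hmem0
    refine ⟨a, ⟨j, ha, hmem0, hra⟩, ?_⟩
    rintro a' ⟨j'', hd⟩
    have hj'' := hcol0 j'' a' hd
    subst hj''
    exact huniq a' ⟨hd.1, hd.2.2⟩
  · -- unique displaced
    obtain ⟨b, ⟨hb, hrb⟩, huniq⟩ :=
      M.rank_exists_unique j' (M.Nset0 μ μs j') (M.Nset1 μ μs j')
        (hcard j').symm hmem1
    refine ⟨b, ⟨j', hmem1, hb, hrb.symm⟩, ?_⟩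
    rintro b' ⟨j'', hd⟩
    have hj'' := hcol1 j'' b' hd
    subst hj''
    exact huniq b' ⟨hd.2.1, hd.2.2.symm⟩
  · -- distinctness and distinct colleges
    rintro i₀ i₂ ⟨j₁, hd₁⟩ ⟨j₂, hd₂⟩ _
    have hj₁ := hcol0 j₁ i₀ hd₁
    have hj₂ := hcol1 j₂ i₂ hd₂
    subst hj₁; subst hj₂
    have h01 : i₀ ≠ i₁ := by
      intro h
      subst h
      have h1 := Finset.mem_sdiff.1 hd₁.1
      have h2 := Finset.mem_sdiff.1 hd₁.2.1
      exact h1.2 h2.1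
    have h12 : i₁ ≠ i₂ := by
      intro h
      have h1 := Finset.mem_sdiff.1 hd₂.1
      have h2 := Finset.mem_sdiff.1 hd₂.2.1
      rw [← h] at h2
      exact h1.2 h2.1
    exact ⟨h01, h12, j₁, j₂, hjj', hd₁, hd₂⟩
end
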